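/- Let g₁, g₂ be compact subsets of ℝ² with μ(g₁ ∩ g₂) ≤ μ(g₁ \ g₂), where μ is Lebesgue measure. Then the transformed geometry g₁' = closure(g₁ \ g₂) satisfies δ(g₁, g₁') = μ(g₁ ∩ g₂) whenever μ(frontier g₂) = 0. -/

import Mathlib

open MeasureTheory

/-- Symmetric-difference (area) distance. -/
noncomputable def sdDist (a b : Set (ℝ × ℝ)) : ENNReal :=
  volume (symmDiff a b)

/-! Points of `g₁ ∩ g₂` that are limits of points of `g₁ \ g₂` lie on `frontier g₂`, so up to a null
set, removing `closure (g₁ \ g₂)` from the closed set `g₁` leaves exactly `g₁ ∩ g₂`. -/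

section Topology

variable {X : Type*} [TopologicalSpace X] (s t : Set X)

theorem diff_closure_diff_subset_inter : s \ closure (s \ t) ⊆ s ∩ t :=
  fun _ ⟨hxs, hx⟩ => ⟨hxs, by_contra fun hxt => hx (subset_closure ⟨hxs, hxt⟩)⟩

theorem inter_diff_frontier_subset_diff_closure_diff :
    (s ∩ t) \ frontier t ⊆ s \ closure (s \ t) := by
  rintro x ⟨⟨hxs, hxt⟩, hxf⟩
  refine ⟨hxs, fun hcl => hxf ⟨subset_closure hxt, ?_⟩⟩
  rw [← Set.mem_compl_iff, ← closure_compl]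
  exact closure_mono (fun y hy => hy.2) hcl

theorem symmDiff_closure_diff_of_isClosed {s : Set X} (hs : IsClosed s) :
    symmDiff s (closure (s \ t)) = s \ closure (s \ t) :=
  symmDiff_of_ge (closure_minimal Set.sdiff_subset hs)

end Topology

theorem measure_diff_closure_diff {X : Type*} [TopologicalSpace X] [MeasurableSpace X]
    (μ : Measure X) (s : Set X) {t : Set X} (ht : μ (frontier t) = 0) :
    μ (s \ closure (s \ t)) = μ (s ∩ t) := by
  refine le_antisymm (measure_mono (diff_closure_diff_subset_inter s t)) ?_
  calc μ (s ∩ t) = μ ((s ∩ t) \ frontier t) := (measure_sdiff_null ht).symm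
    _ ≤ μ (s \ closure (s \ t)) := measure_mono (inter_diff_frontier_subset_diff_closure_diff s t)

theorem sdDist_difference_transformation_general (g₁ g₂ : Set (ℝ × ℝ))
    (hc₁ : IsCompact g₁)
    (hfr : volume (frontier g₂) = 0) :
    sdDist g₁ (closure (g₁ \ g₂)) = volume (g₁ ∩ g₂) := by
  rw [sdDist, symmDiff_closure_diff_of_isClosed g₂ hc₁.isClosed]
  exact measure_diff_closure_diff volume g₁ hfr

theorem sdDist_difference_transformation (g₁ g₂ : Set (ℝ × ℝ))
    (hc₁ : IsCompact g₁) (hc₂ : IsCompact g₂)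
    (harea : volume (g₁ ∩ g₂) ≤ volume (g₁ \ g₂))
    (hfr : volume (frontier g₂) = 0) :
    sdDist g₁ (closure (g₁ \ g₂)) = volume (g₁ ∩ g₂) :=
  sdDist_difference_transformation_general g₁ g₂ hc₁ hfr
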